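/- arXiv:1503.05029 — 3 statements merged into one kernel-verified Lean document; each statement's English description precedes it below -/
import Mathlib

section
/- In the perfect-model Kalman filter recursion, for every n ≥ 1 the matrix Δ_n − M_n Δ_0 M_nᵀ is positive semidefinite, i.e. Δ_n ⪰ M_n Δ_0 M_nᵀ. -/
open Matrix Filter

/-- The operator (spectral) norm of a real matrix: the norm of the induced linear map
between Euclidean spaces. -/
noncomputable def opNorm {d e : ℕ} (Z : Matrix (Fin e) (Fin d) ℝ) : ℝ :=
  ‖LinearMap.toContinuousLinearMap (Matrix.toEuclideanLin Z)‖

/-- Analysis error covariance `Δ_n` of the perfect-model Kalman filter recursion: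
`Δ_0` is the initial covariance and, for `n ≥ 1`,
`Σ_n = A_n Δ_{n−1} A_nᵀ`, `K_n = Σ_n H_nᵀ (H_n Σ_n H_nᵀ + Q_n)⁻¹`,
`Δ_n = (I − K_n H_n) Σ_n`. -/
noncomputable def KFDelta {d q : ℕ} (A : ℕ → Matrix (Fin d) (Fin d) ℝ)
    (H : ℕ → Matrix (Fin q) (Fin d) ℝ) (Q : ℕ → Matrix (Fin q) (Fin q) ℝ)
    (Δ0 : Matrix (Fin d) (Fin d) ℝ) : ℕ → Matrix (Fin d) (Fin d) ℝ
  | 0 => Δ0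
  | n + 1 =>
      let S := A (n + 1) * KFDelta A H Q Δ0 n * (A (n + 1))ᵀ
      let K := S * (H (n + 1))ᵀ * (H (n + 1) * S * (H (n + 1))ᵀ + Q (n + 1))⁻¹
      (1 - K * H (n + 1)) * S

/-- Forecast error covariance: `KFSigma A H Q Δ0 n = Σ_{n+1} = A_{n+1} Δ_n A_{n+1}ᵀ`. -/
noncomputable def KFSigma {d q : ℕ} (A : ℕ → Matrix (Fin d) (Fin d) ℝ)
    (H : ℕ → Matrix (Fin q) (Fin d) ℝ) (Q : ℕ → Matrix (Fin q) (Fin q) ℝ)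
    (Δ0 : Matrix (Fin d) (Fin d) ℝ) (n : ℕ) : Matrix (Fin d) (Fin d) ℝ :=
  A (n + 1) * KFDelta A H Q Δ0 n * (A (n + 1))ᵀ

/-- Kalman gain: `KFGain A H Q Δ0 n = K_{n+1} = Σ_{n+1} H_{n+1}ᵀ (H_{n+1} Σ_{n+1} H_{n+1}ᵀ + Q_{n+1})⁻¹`. -/
noncomputable def KFGain {d q : ℕ} (A : ℕ → Matrix (Fin d) (Fin d) ℝ)
    (H : ℕ → Matrix (Fin q) (Fin d) ℝ) (Q : ℕ → Matrix (Fin q) (Fin q) ℝ)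
    (Δ0 : Matrix (Fin d) (Fin d) ℝ) (n : ℕ) : Matrix (Fin d) (Fin q) ℝ :=
  KFSigma A H Q Δ0 n * (H (n + 1))ᵀ *
    (H (n + 1) * KFSigma A H Q Δ0 n * (H (n + 1))ᵀ + Q (n + 1))⁻¹

/-- `KFM A H Q Δ0 n = M_n = (I − K_n H_n) A_n ⋯ (I − K_1 H_1) A_1` (with `M_0 = I`). -/
noncomputable def KFM {d q : ℕ} (A : ℕ → Matrix (Fin d) (Fin d) ℝ)
    (H : ℕ → Matrix (Fin q) (Fin d) ℝ) (Q : ℕ → Matrix (Fin q) (Fin q) ℝ)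
    (Δ0 : Matrix (Fin d) (Fin d) ℝ) : ℕ → Matrix (Fin d) (Fin d) ℝ
  | 0 => 1
  | n + 1 => (1 - KFGain A H Q Δ0 n * H (n + 1)) * A (n + 1) * KFM A H Q Δ0 n

/-- `KFB A n = B_{0:n} = A_n ⋯ A_1` (with `B_{0:0} = I`). -/
noncomputable def KFB {d : ℕ} (A : ℕ → Matrix (Fin d) (Fin d) ℝ) :
    ℕ → Matrix (Fin d) (Fin d) ℝ
  | 0 => 1
  | n + 1 => A (n + 1) * KFB A n

/-- Propagator `KFBp A n m = B_{n:n+m} = A_{n+m} ⋯ A_{n+1}` (with `B_{n:n} = I`). -/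
noncomputable def KFBp {d : ℕ} (A : ℕ → Matrix (Fin d) (Fin d) ℝ) (n : ℕ) :
    ℕ → Matrix (Fin d) (Fin d) ℝ
  | 0 => 1
  | m + 1 => A (n + m + 1) * KFBp A n m

/-- Uniform complete observability: there is `δ > 0` with
`det(Σ_{m=0}^{d−1} B_{n:n+m}ᵀ H_{n+m}ᵀ Q_{n+m}⁻¹ H_{n+m} B_{n:n+m}) ≥ δ` for all `n ≥ 1`. -/
def UCO {d q : ℕ} (A : ℕ → Matrix (Fin d) (Fin d) ℝ)
    (H : ℕ → Matrix (Fin q) (Fin d) ℝ) (Q : ℕ → Matrix (Fin q) (Fin q) ℝ) : Prop :=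
  ∃ δ > (0 : ℝ), ∀ n, 1 ≤ n →
    δ ≤ (∑ m ∈ Finset.range d,
      (KFBp A n m)ᵀ * (H (n + m))ᵀ * (Q (n + m))⁻¹ * H (n + m) * KFBp A n m).det

/-!
With `X = (I - K H) A`, the gain equation `K (H Σ Hᵀ + Q) = Σ Hᵀ` turns the analysis step into
the Joseph form `Δ_{n+1} = X Δ_n Xᵀ + K Q Kᵀ`; the gain equation holds because `H Σ Hᵀ + Q` is
positive definite, `Δ_n` being positive semidefinite by the same recursion. Since
`M_{n+1} = X M_n`, the difference `D_n = Δ_n - M_n Δ_0 M_nᵀ` obeys `D_{n+1} = X D_n Xᵀ + K Q Kᵀ`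
with `D_0 = 0`, and congruences and sums of positive semidefinite matrices stay positive
semidefinite.
-/

lemma Matrix.PosSemidef.mul_mul_transpose_same {m n R : Type*} [Fintype n] [Finite m] [Ring R]
    [PartialOrder R] [StarRing R] [TrivialStar R] {S : Matrix n n R} (hS : S.PosSemidef)
    (B : Matrix m n R) : (B * S * Bᵀ).PosSemidef := by
  simpa only [conjTranspose_eq_transpose_of_trivial] using hS.mul_mul_conjTranspose_same B

lemma Matrix.joseph_form {m n R : Type*} [Fintype m] [Fintype n] [DecidableEq n] [CommRing R]
    {S : Matrix n n R} {H : Matrix m n R} {Q : Matrix m m R} {K : Matrix n m R}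
    (hK : K * (H * S * Hᵀ + Q) = S * Hᵀ) :
    (1 - K * H) * S = (1 - K * H) * S * (1 - K * H)ᵀ + K * Q * Kᵀ := by
  have hSH : (1 - K * H) * S * Hᵀ = K * Q := by
    rw [Matrix.sub_mul, Matrix.sub_mul, Matrix.one_mul, ← hK]
    simp only [Matrix.mul_add, Matrix.mul_assoc]
    abel
  rw [transpose_sub, transpose_one, transpose_mul, Matrix.mul_sub, Matrix.mul_one,
    ← Matrix.mul_assoc, hSH]
  abel

section KalmanFilter

variable {d q : ℕ} (A : ℕ → Matrix (Fin d) (Fin d) ℝ) (H : ℕ → Matrix (Fin q) (Fin d) ℝ)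
  (Q : ℕ → Matrix (Fin q) (Fin q) ℝ) (Δ0 : Matrix (Fin d) (Fin d) ℝ)

lemma KFGain_mul_innovation {n : ℕ}
    (hR : IsUnit (H (n + 1) * KFSigma A H Q Δ0 n * (H (n + 1))ᵀ + Q (n + 1)).det) :
    KFGain A H Q Δ0 n * (H (n + 1) * KFSigma A H Q Δ0 n * (H (n + 1))ᵀ + Q (n + 1)) =
      KFSigma A H Q Δ0 n * (H (n + 1))ᵀ :=
  nonsing_inv_mul_cancel_right _ _ hR

noncomputable def KFTransition (n : ℕ) : Matrix (Fin d) (Fin d) ℝ :=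
  (1 - KFGain A H Q Δ0 n * H (n + 1)) * A (n + 1)

lemma KFDelta_succ_eq_joseph {n : ℕ} (hΔ : (KFDelta A H Q Δ0 n).PosSemidef)
    (hQ : (Q (n + 1)).PosDef) :
    KFDelta A H Q Δ0 (n + 1) =
      KFTransition A H Q Δ0 n * KFDelta A H Q Δ0 n * (KFTransition A H Q Δ0 n)ᵀ +
        KFGain A H Q Δ0 n * Q (n + 1) * (KFGain A H Q Δ0 n)ᵀ := by
  have hS : (KFSigma A H Q Δ0 n).PosSemidef := hΔ.mul_mul_transpose_same (A (n + 1))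
  have hR : (H (n + 1) * KFSigma A H Q Δ0 n * (H (n + 1))ᵀ + Q (n + 1)).PosDef :=
    hQ.posSemidef_add (hS.mul_mul_transpose_same (H (n + 1)))
  have hJoseph :=
    joseph_form (KFGain_mul_innovation A H Q Δ0 ((isUnit_iff_isUnit_det _).mp hR.isUnit))
  change (1 - KFGain A H Q Δ0 n * H (n + 1)) * KFSigma A H Q Δ0 n = _
  rw [hJoseph, KFTransition, KFSigma, transpose_mul]
  simp only [Matrix.mul_assoc]

lemma KFDelta_posSemidef (hQ : ∀ n, 1 ≤ n → (Q n).PosDef) (hΔ0 : Δ0.PosSemidef) :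
    ∀ n, (KFDelta A H Q Δ0 n).PosSemidef
  | 0 => hΔ0
  | n + 1 => by
    have hΔ := KFDelta_posSemidef hQ hΔ0 n
    have hQn := hQ (n + 1) n.succ_pos
    rw [KFDelta_succ_eq_joseph A H Q Δ0 hΔ hQn]
    exact (hΔ.mul_mul_transpose_same _).add (hQn.posSemidef.mul_mul_transpose_same _)

lemma KFDelta_sub_sandwich_succ {n : ℕ} (hΔ : (KFDelta A H Q Δ0 n).PosSemidef)
    (hQ : (Q (n + 1)).PosDef) :
    KFDelta A H Q Δ0 (n + 1) - KFM A H Q Δ0 (n + 1) * Δ0 * (KFM A H Q Δ0 (n + 1))ᵀ =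
      KFTransition A H Q Δ0 n *
          (KFDelta A H Q Δ0 n - KFM A H Q Δ0 n * Δ0 * (KFM A H Q Δ0 n)ᵀ) *
          (KFTransition A H Q Δ0 n)ᵀ +
        KFGain A H Q Δ0 n * Q (n + 1) * (KFGain A H Q Δ0 n)ᵀ := by
  have hM : KFM A H Q Δ0 (n + 1) = KFTransition A H Q Δ0 n * KFM A H Q Δ0 n := rfl
  rw [KFDelta_succ_eq_joseph A H Q Δ0 hΔ hQ, hM, transpose_mul]
  simp only [Matrix.mul_sub, Matrix.sub_mul, Matrix.mul_assoc]
  abel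

lemma KFDelta_sub_sandwich_posSemidef (hQ : ∀ n, 1 ≤ n → (Q n).PosDef)
    (hΔ0 : Δ0.PosSemidef) :
    ∀ n, (KFDelta A H Q Δ0 n - KFM A H Q Δ0 n * Δ0 * (KFM A H Q Δ0 n)ᵀ).PosSemidef
  | 0 => by simpa [KFDelta, KFM] using PosSemidef.zero
  | n + 1 => by
    have hD := KFDelta_sub_sandwich_posSemidef hQ hΔ0 n
    have hQn := hQ (n + 1) n.succ_pos
    rw [KFDelta_sub_sandwich_succ A H Q Δ0 (KFDelta_posSemidef A H Q Δ0 hQ hΔ0 n) hQn]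
    exact (hD.mul_mul_transpose_same _).add (hQn.posSemidef.mul_mul_transpose_same _)

end KalmanFilter

theorem kalman_analysis_covariance_ge_sandwich_general
    {d q : ℕ} (A : ℕ → Matrix (Fin d) (Fin d) ℝ)
    (H : ℕ → Matrix (Fin q) (Fin d) ℝ) (Q : ℕ → Matrix (Fin q) (Fin q) ℝ)
    (Δ0 : Matrix (Fin d) (Fin d) ℝ)
    (hQ : ∀ n, 1 ≤ n → (Q n).PosDef)
    (hΔ0 : Δ0.PosSemidef) :
    ∀ n, 1 ≤ n →
      (KFDelta A H Q Δ0 n - KFM A H Q Δ0 n * Δ0 * (KFM A H Q Δ0 n)ᵀ).PosSemidef :=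
  fun n _ => KFDelta_sub_sandwich_posSemidef A H Q Δ0 hQ hΔ0 n

/-- In the perfect-model Kalman filter recursion, for every `n ≥ 1` the
matrix `Δ_n − M_n Δ_0 M_nᵀ` is positive semidefinite. -/
theorem kalman_analysis_covariance_ge_sandwich
    {d q : ℕ} (A : ℕ → Matrix (Fin d) (Fin d) ℝ)
    (H : ℕ → Matrix (Fin q) (Fin d) ℝ) (Q : ℕ → Matrix (Fin q) (Fin q) ℝ)
    (Δ0 : Matrix (Fin d) (Fin d) ℝ)
    (hA : ∀ n, 1 ≤ n → IsUnit (A n).det)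
    (hQ : ∀ n, 1 ≤ n → (Q n).PosDef)
    (hΔ0 : Δ0.PosSemidef) :
    ∀ n, 1 ≤ n →
      (KFDelta A H Q Δ0 n - KFM A H Q Δ0 n * Δ0 * (KFM A H Q Δ0 n)ᵀ).PosSemidef :=
  kalman_analysis_covariance_ge_sandwich_general A H Q Δ0 hQ hΔ0
end

section
/- Let d ≥ 1 and for each n ≥ 1 let Δ_n, M_n, B_n, Δ_0 ∈ ℝ^{d×d} with: Δ_0, M_n, and B_n invertible; Δ_n = M_n Δ_0 B_nᵀ; Δ_n symmetric; and sup_n ‖M_n‖ ≤ c_M < ∞. Suppose there exist a k-dimensional subspace W ⊆ ℝ^d and constants C > 0, γ > 0 such that ‖B_n l‖ ≤ C e^{−γ n} ‖l‖ for all l ∈ W and all n ≥ 1. Then for every ε > 0 there exists N such that for all n ≥ N the symmetric matrix Δ_n has at least k eigenvalues (with multiplicity) of absolute value less than ε. -/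
open Matrix Filter

/-!
Symmetry turns `Δₙ = Mₙ Δ₀ Bₙᵀ` into `Δₙ = Bₙ Pₙ` with `Pₙ = Δ₀ᵀ Mₙᵀ` invertible and
`‖Pₙ‖ ≤ ‖Δ₀‖ c_M`, so on the `k`-dimensional subspace `Pₙ⁻¹ W` we have
`‖Δₙ x‖ ≤ C ‖Δ₀‖ c_M e^{-γn} ‖x‖`, with a factor eventually below `ε`. A symmetric `A` with
`‖A x‖ < ε ‖x‖` on a `k`-dimensional subspace has at least `k` eigenvalues of absolute value below
`ε`: otherwise, by counting dimensions, that subspace meets the span of the eigenvectors with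
`|λ| ≥ ε`, on which `‖A x‖ ≥ ε ‖x‖`.
-/

open Module

theorem LinearIndependent.finrank_span_image {K M ι : Type*} [DivisionRing K] [AddCommGroup M]
    [Module K M] {v : ι → M} (hv : LinearIndependent K v) (s : Set ι) [Finite s] :
    finrank K (Submodule.span K (v '' s)) = Nat.card s := by
  have := Fintype.ofFinite s
  rw [Set.image_eq_range, Nat.card_eq_fintype_card]
  exact finrank_span_eq_card (hv.comp _ Subtype.val_injective)

theorem Submodule.finrank_le_finrank_comap_of_surjective {K M M' : Type*} [DivisionRing K]
    [AddCommGroup M] [Module K M] [FiniteDimensional K M] [AddCommGroup M'] [Module K M']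
    {f : M →ₗ[K] M'} (hf : Function.Surjective f) (W : Submodule K M') :
    finrank K W ≤ finrank K (W.comap f) :=
  calc finrank K W = finrank K ((W.comap f).map f) := by rw [map_comap_eq_of_surjective hf]
    _ ≤ finrank K (W.comap f) := Submodule.finrank_map_le f _

namespace LinearMap.IsSymmetric

variable {𝕜 E : Type*} [RCLike 𝕜] [NormedAddCommGroup E] [InnerProductSpace 𝕜 E]
  [FiniteDimensional 𝕜 E] {T : E →ₗ[𝕜] E} (hT : T.IsSymmetric) {n : ℕ} (hn : finrank 𝕜 E = n)
include hT

theorem mul_norm_le_norm_apply_of_mem_span {ε : ℝ} (hε : 0 ≤ ε) {x : E}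
    (hx : x ∈ Submodule.span 𝕜 (hT.eigenvectorBasis hn '' {i | ε ≤ |hT.eigenvalues hn i|})) :
    ε * ‖x‖ ≤ ‖T x‖ := by
  set b := hT.eigenvectorBasis hn
  have hsupp : ∀ i, ¬ ε ≤ |hT.eigenvalues hn i| → b.repr x i = 0 := by
    rw [← b.coe_toBasis, Basis.mem_span_image] at hx
    intro i hi
    simpa using Finsupp.notMem_support_iff.1 (fun h => hi (hx h))
  have hsq : (ε * ‖x‖) ^ 2 ≤ ‖T x‖ ^ 2 := by
    rw [mul_pow, ← b.repr.norm_map x, ← b.repr.norm_map (T x), EuclideanSpace.norm_sq_eq,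
      EuclideanSpace.norm_sq_eq, Finset.mul_sum]
    refine Finset.sum_le_sum fun i _ => ?_
    rw [hT.eigenvectorBasis_apply_self_apply hn, norm_mul, mul_pow, RCLike.norm_ofReal]
    by_cases hi : ε ≤ |hT.eigenvalues hn i|
    · gcongr
    · calc _ = (0 : ℝ) := by simp [hsupp i hi]
        _ ≤ _ := by positivity
  exact (abs_le_of_sq_le_sq' hsq (norm_nonneg _)).2

theorem finrank_le_card_abs_eigenvalues_lt {V : Submodule 𝕜 E} {ε : ℝ}
    (hV : ∀ x ∈ V, x ≠ 0 → ‖T x‖ < ε * ‖x‖) :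
    finrank 𝕜 V ≤ Finset.card {i | |hT.eigenvalues hn i| < ε} := by
  classical
  set U := Submodule.span 𝕜 (hT.eigenvectorBasis hn '' {i | ε ≤ |hT.eigenvalues hn i|})
  have hdisj : Disjoint U V := by
    refine Submodule.disjoint_def.2 fun x hxU hxV => by_contra fun hx0 => ?_
    have hlt := hV x hxV hx0
    have hε : 0 ≤ ε := (pos_of_mul_pos_left ((norm_nonneg _).trans_lt hlt) (norm_nonneg x)).le
    linarith [hT.mul_norm_le_norm_apply_of_mem_span hn hε hxU]
  have hdim := Submodule.finrank_add_finrank_le_of_disjoint hdisj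
  rw [(hT.eigenvectorBasis hn).orthonormal.linearIndependent.finrank_span_image, hn] at hdim
  have hcard := Finset.card_filter_add_card_filter_not (s := Finset.univ)
    (fun i => |hT.eigenvalues hn i| < ε)
  simp only [not_lt, Finset.card_univ, Fintype.card_fin] at hcard
  simp only [Set.coe_ofPred, Nat.card_eq_fintype_card, Fintype.card_subtype] at hdim
  omega

end LinearMap.IsSymmetric

theorem Matrix.IsHermitian.finrank_le_card_roots_charpoly_norm_lt {𝕜 ι : Type*} [RCLike 𝕜]
    [Fintype ι] [DecidableEq ι] {A : Matrix ι ι 𝕜} (hA : A.IsHermitian)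
    {V : Submodule 𝕜 (EuclideanSpace 𝕜 ι)} {ε : ℝ}
    (hV : ∀ x ∈ V, x ≠ 0 → ‖toEuclideanLin A x‖ < ε * ‖x‖) :
    finrank 𝕜 V ≤ Multiset.card (A.charpoly.roots.filter fun x => ‖x‖ < ε) := by
  rw [hA.roots_charpoly_eq_eigenvalues₀, Multiset.filter_map, Multiset.card_map,
    ← Finset.filter_val, ← Finset.card_def]
  simpa [Function.comp_def, eigenvalues₀] using
    (isSymmetric_toEuclideanLin_iff.mpr hA).finrank_le_card_abs_eigenvalues_lt
      finrank_euclideanSpace hV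

theorem Matrix.toLpLin_surjective {R n : Type*} [CommRing R] [Fintype n] [DecidableEq n]
    (p q : ENNReal) {A : Matrix n n R} (hA : IsUnit A.det) :
    Function.Surjective (toLpLin p q A) := fun y => by
  obtain ⟨v, hv⟩ := mulVec_surjective_iff_isUnit.2 ((isUnit_iff_isUnit_det A).2 hA) y.ofLp
  exact ⟨WithLp.toLp p v, by simp [toLpLin_apply, hv]⟩

theorem tendsto_mul_exp_neg_mul_natCast (K : ℝ) {γ : ℝ} (hγ : 0 < γ) :
    Tendsto (fun n : ℕ => K * Real.exp (-γ * n)) atTop (nhds 0) := by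
  have h := Real.tendsto_exp_neg_atTop_nhds_zero.comp
    (tendsto_natCast_atTop_atTop.const_mul_atTop hγ)
  simpa [Function.comp_def] using h.const_mul K

section opNorm

open scoped Matrix.Norms.L2Operator

variable {d e : ℕ}

theorem opNorm_eq_norm (Z : Matrix (Fin e) (Fin d) ℝ) : opNorm Z = ‖Z‖ := rfl

theorem opNorm_nonneg (Z : Matrix (Fin e) (Fin d) ℝ) : 0 ≤ opNorm Z := norm_nonneg Z

theorem norm_toEuclideanLin_apply_le (Z : Matrix (Fin e) (Fin d) ℝ)
    (x : EuclideanSpace ℝ (Fin d)) :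
    ‖toEuclideanLin Z x‖ ≤ opNorm Z * ‖x‖ :=
  (LinearMap.toContinuousLinearMap (toEuclideanLin Z)).le_opNorm x

theorem opNorm_mul_le {f : ℕ} (Y : Matrix (Fin f) (Fin e) ℝ) (Z : Matrix (Fin e) (Fin d) ℝ) :
    opNorm (Y * Z) ≤ opNorm Y * opNorm Z :=
  l2_opNorm_mul Y Z

theorem opNorm_transpose (Z : Matrix (Fin e) (Fin d) ℝ) : opNorm Zᵀ = opNorm Z := by
  simpa [opNorm_eq_norm] using l2_opNorm_conjTranspose Z

end opNorm

theorem Matrix.IsHermitian.finrank_le_card_roots_charpoly_abs_lt_of_eq_mul {d : ℕ}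
    {A B P : Matrix (Fin d) (Fin d) ℝ} (hA : A.IsHermitian) (hAB : A = B * P)
    (hP : IsUnit P.det) {W : Submodule ℝ (EuclideanSpace ℝ (Fin d))} {c ε : ℝ} (hc : 0 ≤ c)
    (hB : ∀ l ∈ W, ‖toEuclideanLin B l‖ ≤ c * ‖l‖) (hε : c * opNorm P < ε) :
    finrank ℝ W ≤ Multiset.card (A.charpoly.roots.filter fun x => |x| < ε) := by
  refine (Submodule.finrank_le_finrank_comap_of_surjective (toLpLin_surjective 2 2 hP) W).trans ?_
  simp only [← Real.norm_eq_abs]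
  refine hA.finrank_le_card_roots_charpoly_norm_lt fun x hx hx0 => ?_
  calc ‖toEuclideanLin A x‖ = ‖toEuclideanLin B (toEuclideanLin P x)‖ := by
        rw [hAB, toLpLin_mul_same]; rfl
    _ ≤ c * ‖toEuclideanLin P x‖ := hB _ hx
    _ ≤ c * (opNorm P * ‖x‖) := by gcongr; exact norm_toEuclideanLin_apply_le P x
    _ < ε * ‖x‖ := by rw [← mul_assoc]; exact mul_lt_mul_of_pos_right hε (norm_pos_iff.2 hx0)

theorem eventually_many_small_eigenvalues_of_decay_general
    {d : ℕ} (k : ℕ)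
    (Δ M B : ℕ → Matrix (Fin d) (Fin d) ℝ) (Δ0 : Matrix (Fin d) (Fin d) ℝ)
    (hΔ0 : IsUnit Δ0.det)
    (hM : ∀ n, 1 ≤ n → IsUnit (M n).det)
    (hfac : ∀ n, 1 ≤ n → Δ n = M n * Δ0 * (B n)ᵀ)
    (hsym : ∀ n, 1 ≤ n → (Δ n).IsHermitian)
    (cM : ℝ) (hcM : ∀ n, 1 ≤ n → opNorm (M n) ≤ cM)
    (W : Submodule ℝ (EuclideanSpace ℝ (Fin d))) (hW : Module.finrank ℝ W = k)
    (C γ : ℝ) (hC : 0 < C) (hγ : 0 < γ)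
    (hdecay : ∀ l ∈ W, ∀ n : ℕ, 1 ≤ n →
      ‖Matrix.toEuclideanLin (B n) l‖ ≤ C * Real.exp (-γ * n) * ‖l‖) :
    ∀ ε > (0 : ℝ), ∃ N, ∀ n, N ≤ n →
      k ≤ Multiset.card ((Δ n).charpoly.roots.filter fun x => |x| < ε) := by
  intro ε hε
  obtain ⟨N, hN⟩ := eventually_atTop.1 <|
    (tendsto_mul_exp_neg_mul_natCast (C * opNorm Δ0 * cM) hγ).eventually (gt_mem_nhds hε)
  refine ⟨max N 1, fun n hn => ?_⟩
  have hn1 : 1 ≤ n := le_of_max_le_right hn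
  have hΔ : Δ n = B n * (Δ0ᵀ * (M n)ᵀ) := by
    rw [← (isHermitian_iff_isSymm.1 (hsym n hn1)).eq, hfac n hn1]
    simp [transpose_mul, Matrix.mul_assoc]
  have hP : IsUnit (Δ0ᵀ * (M n)ᵀ).det := by simpa using hΔ0.mul (hM n hn1)
  have hnormP : opNorm (Δ0ᵀ * (M n)ᵀ) ≤ opNorm Δ0 * cM :=
    calc opNorm (Δ0ᵀ * (M n)ᵀ) ≤ opNorm Δ0ᵀ * opNorm (M n)ᵀ := opNorm_mul_le _ _
      _ ≤ opNorm Δ0 * cM := by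
        rw [opNorm_transpose, opNorm_transpose]
        exact mul_le_mul_of_nonneg_left (hcM n hn1) (opNorm_nonneg _)
  rw [← hW]
  refine (hsym n hn1).finrank_le_card_roots_charpoly_abs_lt_of_eq_mul hΔ hP
    (by positivity) (fun l hl => hdecay l hl n hn1) ?_
  calc C * Real.exp (-γ * n) * opNorm (Δ0ᵀ * (M n)ᵀ)
      ≤ C * Real.exp (-γ * n) * (opNorm Δ0 * cM) := by gcongr
    _ = C * opNorm Δ0 * cM * Real.exp (-γ * n) := by ring
    _ < ε := hN n (le_of_max_le_left hn)

/-- Suppose `Δ_n = M_n Δ_0 B_nᵀ` with `Δ_0`, `M_n`, `B_n` invertible, each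
`Δ_n` symmetric, `‖M_n‖ ≤ c_M`, and there is a `k`-dimensional subspace `W` with
`‖B_n l‖ ≤ C e^{−γ n} ‖l‖` for `l ∈ W`. Then for every `ε > 0`, eventually `Δ_n` has at
least `k` eigenvalues (with multiplicity, i.e. as roots of its characteristic polynomial)
of absolute value less than `ε`. -/
theorem eventually_many_small_eigenvalues_of_decay
    {d : ℕ} (hd : 1 ≤ d) (k : ℕ)
    (Δ M B : ℕ → Matrix (Fin d) (Fin d) ℝ) (Δ0 : Matrix (Fin d) (Fin d) ℝ)
    (hΔ0 : IsUnit Δ0.det)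
    (hM : ∀ n, 1 ≤ n → IsUnit (M n).det)
    (hB : ∀ n, 1 ≤ n → IsUnit (B n).det)
    (hfac : ∀ n, 1 ≤ n → Δ n = M n * Δ0 * (B n)ᵀ)
    (hsym : ∀ n, 1 ≤ n → (Δ n).IsHermitian)
    (cM : ℝ) (hcM : ∀ n, 1 ≤ n → opNorm (M n) ≤ cM)
    (W : Submodule ℝ (EuclideanSpace ℝ (Fin d))) (hW : Module.finrank ℝ W = k)
    (C γ : ℝ) (hC : 0 < C) (hγ : 0 < γ)
    (hdecay : ∀ l ∈ W, ∀ n : ℕ, 1 ≤ n →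
      ‖Matrix.toEuclideanLin (B n) l‖ ≤ C * Real.exp (-γ * n) * ‖l‖) :
    ∀ ε > (0 : ℝ), ∃ N, ∀ n, N ≤ n →
      k ≤ Multiset.card ((Δ n).charpoly.roots.filter fun x => |x| < ε) :=
  eventually_many_small_eigenvalues_of_decay_general k Δ M B Δ0 hΔ0 hM hfac hsym cM hcM W hW C γ hC
    hγ hdecay
end

section
/- Let λ ∈ ℂ, k ≥ 1, and let J_λ ∈ ℂ^{k×k} be the Jordan block with eigenvalue λ. Then for every j ∈ {1, …, k}, σ_j(J_λ^n)^{1/n} → |λ| as n → ∞; that is, all limiting n-th roots of the singular values of the n-th power of a Jordan block equal the absolute value of its eigenvalue. -/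
/-!
Gelfand's formula gives `‖J ^ n‖ ^ (1 / n) → |λ|` for the Frobenius norm, since the spectrum of
`J = J_λ` is `{λ}`. Every singular value of a matrix `Z` is at most `‖Z‖`; on the other hand the
squared singular values multiply to `|det Z| ^ 2` and each is at most `‖Z‖ ^ 2`, so every singular
value is at least `|det Z| / ‖Z‖ ^ (k - 1)`. For `Z = J ^ n` we have `|det Z| = |λ| ^ (k n)`, and
after taking `n`-th roots `σ_j(J ^ n) ^ (1 / n)` is squeezed between
`|λ| ^ k / (‖J ^ n‖ ^ (1 / n)) ^ (k - 1)` and `‖J ^ n‖ ^ (1 / n)`, both of which tend to `|λ|`.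
-/

open Matrix Filter

/-- The `j`-th largest singular value of a square complex matrix `Z` (indexing `j = 0` gives
the largest): the square root of the `j`-th largest eigenvalue of the Hermitian positive
semidefinite matrix `Zᴴ * Z`. -/
noncomputable def sval {k : ℕ} (Z : Matrix (Fin k) (Fin k) ℂ) (j : Fin k) : ℝ :=
  Real.sqrt
    (((Matrix.isHermitian_conjTranspose_mul_self Z).eigenvalues ∘
      Tuple.sort (Matrix.isHermitian_conjTranspose_mul_self Z).eigenvalues) j.rev)

/-- The `k × k` Jordan block with eigenvalue `lam`: `lam` on the diagonal, `1` on the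
superdiagonal, `0` elsewhere. -/
def jordanBlock (lam : ℂ) (k : ℕ) : Matrix (Fin k) (Fin k) ℂ :=
  Matrix.of fun i j => if (j : ℕ) = (i : ℕ) + 1 then 1 else if j = i then lam else 0

open scoped ComplexOrder

attribute [local instance] Matrix.frobeniusNormedAddCommGroup Matrix.frobeniusNormedRing
  Matrix.frobeniusNormedAlgebra

lemma jordanBlock_isUpperTriangular (lam : ℂ) (k : ℕ) : (jordanBlock lam k).IsUpperTriangular := by
  intro i j (hji : (j : ℕ) < i)
  simp only [jordanBlock, Matrix.of_apply]
  rw [if_neg (by omega), if_neg (Fin.ne_of_val_ne (by omega))]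

lemma det_jordanBlock (lam : ℂ) (k : ℕ) : (jordanBlock lam k).det = lam ^ k := by
  rw [det_of_isUpperTriangular (jordanBlock_isUpperTriangular lam k)]
  simp [jordanBlock]

lemma jordanBlock_sub_algebraMap (lam μ : ℂ) (k : ℕ) :
    jordanBlock lam k - algebraMap ℂ (Matrix (Fin k) (Fin k) ℂ) μ = jordanBlock (lam - μ) k := by
  ext i j
  rcases eq_or_ne j i with rfl | hij
  · simp [jordanBlock, algebraMap_eq_diagonal]
  · simp [jordanBlock, algebraMap_eq_diagonal, diagonal_apply_ne' _ hij, hij]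

lemma spectrum_jordanBlock (lam : ℂ) {k : ℕ} (hk : 0 < k) :
    spectrum ℂ (jordanBlock lam k) = {lam} := by
  ext μ
  rw [spectrum.mem_iff, ← IsUnit.neg_iff, neg_sub, jordanBlock_sub_algebraMap,
    isUnit_iff_isUnit_det, det_jordanBlock, isUnit_iff_ne_zero, not_not,
    pow_eq_zero_iff hk.ne', sub_eq_zero, eq_comm, Set.mem_singleton_iff]

lemma tendsto_norm_pow_rpow_inv_of_spectralRadius_eq {A : Type*} [NormedRing A]
    [NormedAlgebra ℂ A] [CompleteSpace A] {a : A} {r : NNReal}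
    (h : spectralRadius ℂ a = r) :
    Tendsto (fun n : ℕ => ‖a ^ n‖ ^ (n : ℝ)⁻¹) atTop (nhds r) := by
  have := (ENNReal.tendsto_toReal ENNReal.coe_ne_top).comp
    (h ▸ spectrum.pow_norm_pow_one_div_tendsto_nhds_spectralRadius a)
  refine this.congr fun n => ?_
  simp [ENNReal.toReal_ofReal (Real.rpow_nonneg (norm_nonneg _) _)]

lemma tendsto_frobenius_norm_pow_jordanBlock (lam : ℂ) {k : ℕ} (hk : 0 < k) :
    Tendsto (fun n : ℕ => ‖jordanBlock lam k ^ n‖ ^ (n : ℝ)⁻¹) atTop (nhds ‖lam‖) := by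
  refine tendsto_norm_pow_rpow_inv_of_spectralRadius_eq (r := ‖lam‖₊) ?_
  simp [spectralRadius, spectrum_jordanBlock lam hk]

section SingularValues

variable {𝕜 m n : Type*} [RCLike 𝕜] [Fintype m] [Fintype n]

lemma frobenius_norm_sq_eq_re_trace (Z : Matrix m n 𝕜) : ‖Z‖ ^ 2 = RCLike.re (Zᴴ * Z).trace := by
  rw [frobenius_norm_def, ← Real.sqrt_eq_rpow, Real.sq_sqrt (by positivity), Finset.sum_comm,
    trace, map_sum]
  refine Finset.sum_congr rfl fun j _ => ?_
  rw [diag_apply, mul_apply, map_sum]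
  refine Finset.sum_congr rfl fun i _ => ?_
  rw [Real.rpow_two, conjTranspose_apply, RCLike.star_def, RCLike.conj_mul, ← RCLike.ofReal_pow,
    RCLike.ofReal_re]

variable [DecidableEq n]

lemma sum_eigenvalues_conjTranspose_mul_self (Z : Matrix m n 𝕜) :
    ∑ i, (isHermitian_conjTranspose_mul_self Z).eigenvalues i = ‖Z‖ ^ 2 := by
  rw [frobenius_norm_sq_eq_re_trace,
    (isHermitian_conjTranspose_mul_self Z).trace_eq_sum_eigenvalues, ← RCLike.ofReal_sum,
    RCLike.ofReal_re]

lemma eigenvalues_conjTranspose_mul_self_le (Z : Matrix m n 𝕜) (i : n) :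
    (isHermitian_conjTranspose_mul_self Z).eigenvalues i ≤ ‖Z‖ ^ 2 :=
  sum_eigenvalues_conjTranspose_mul_self Z ▸ Finset.single_le_sum
    (fun l _ => (posSemidef_conjTranspose_mul_self Z).eigenvalues_nonneg l) (Finset.mem_univ i)

lemma prod_eigenvalues_conjTranspose_mul_self (Z : Matrix n n 𝕜) :
    ∏ i, (isHermitian_conjTranspose_mul_self Z).eigenvalues i = ‖Z.det‖ ^ 2 := by
  have h := (isHermitian_conjTranspose_mul_self Z).det_eq_prod_eigenvalues
  rw [det_mul, det_conjTranspose, RCLike.star_def, RCLike.conj_mul, ← RCLike.ofReal_pow,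
    ← RCLike.ofReal_prod] at h
  exact_mod_cast h.symm

lemma norm_det_sq_le_eigenvalues_conjTranspose_mul_self_mul (Z : Matrix n n 𝕜) (i : n) :
    ‖Z.det‖ ^ 2 ≤
      (isHermitian_conjTranspose_mul_self Z).eigenvalues i * (‖Z‖ ^ 2) ^ (Fintype.card n - 1) := by
  set μ := (isHermitian_conjTranspose_mul_self Z).eigenvalues
  have hμ : ∀ l, 0 ≤ μ l := (posSemidef_conjTranspose_mul_self Z).eigenvalues_nonneg
  have hrest : ∏ l ∈ Finset.univ.erase i, μ l ≤ (‖Z‖ ^ 2) ^ (Fintype.card n - 1) := by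
    calc ∏ l ∈ Finset.univ.erase i, μ l ≤ ∏ _l ∈ Finset.univ.erase i, ‖Z‖ ^ 2 :=
          Finset.prod_le_prod (fun l _ => hμ l)
            (fun l _ => eigenvalues_conjTranspose_mul_self_le Z l)
      _ = (‖Z‖ ^ 2) ^ (Fintype.card n - 1) := by
          rw [Finset.prod_const, Finset.card_erase_of_mem (Finset.mem_univ i), Finset.card_univ]
  calc ‖Z.det‖ ^ 2 = μ i * ∏ l ∈ Finset.univ.erase i, μ l := by
        rw [Finset.mul_prod_erase _ _ (Finset.mem_univ i), prod_eigenvalues_conjTranspose_mul_self]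
    _ ≤ μ i * (‖Z‖ ^ 2) ^ (Fintype.card n - 1) := mul_le_mul_of_nonneg_left hrest (hμ i)

variable {k : ℕ}

lemma sval_nonneg (Z : Matrix (Fin k) (Fin k) ℂ) (j : Fin k) : 0 ≤ sval Z j :=
  Real.sqrt_nonneg _

lemma sq_sval (Z : Matrix (Fin k) (Fin k) ℂ) (j : Fin k) :
    sval Z j ^ 2 = (isHermitian_conjTranspose_mul_self Z).eigenvalues
      (Tuple.sort (isHermitian_conjTranspose_mul_self Z).eigenvalues j.rev) :=
  Real.sq_sqrt ((posSemidef_conjTranspose_mul_self Z).eigenvalues_nonneg _)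

lemma sval_le_frobenius_norm (Z : Matrix (Fin k) (Fin k) ℂ) (j : Fin k) : sval Z j ≤ ‖Z‖ :=
  (pow_le_pow_iff_left₀ (sval_nonneg Z j) (norm_nonneg Z) two_ne_zero).1 <|
    sq_sval Z j ▸ eigenvalues_conjTranspose_mul_self_le Z _

lemma norm_det_le_sval_mul_frobenius_norm_pow (Z : Matrix (Fin k) (Fin k) ℂ) (j : Fin k) :
    ‖Z.det‖ ≤ sval Z j * ‖Z‖ ^ (k - 1) := by
  refine (pow_le_pow_iff_left₀ (norm_nonneg _)
    (mul_nonneg (sval_nonneg Z j) (by positivity)) two_ne_zero).1 ?_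
  rw [mul_pow, sq_sval, pow_right_comm]
  simpa using norm_det_sq_le_eigenvalues_conjTranspose_mul_self_mul Z _

end SingularValues

lemma tendsto_of_pow_le_mul_pow {ι : Type*} {l : Filter ι} {a b : ι → ℝ} {L : ℝ} {k : ℕ}
    (hk : 0 < k) (hb : Tendsto b l (nhds L)) (ha : ∀ i, 0 ≤ a i) (hab : ∀ i, a i ≤ b i)
    (hlow : ∀ᶠ i in l, L ^ k ≤ a i * b i ^ (k - 1)) :
    Tendsto a l (nhds L) := by
  rcases l.eq_or_neBot with rfl | _
  · exact tendsto_bot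
  rcases (ge_of_tendsto' hb fun i => (ha i).trans (hab i)).eq_or_lt with rfl | hL
  · exact tendsto_of_tendsto_of_tendsto_of_le_of_le tendsto_const_nhds hb ha hab
  have hLk : L ^ k / L ^ (k - 1) = L := by
    rw [div_eq_iff (by positivity), ← pow_succ', Nat.sub_add_cancel hk]
  have hlim : Tendsto (fun i => L ^ k / b i ^ (k - 1)) l (nhds L) := by
    have := (tendsto_const_nhds (x := L ^ k)).div (hb.pow (k - 1)) (by positivity)
    rwa [hLk] at this
  refine tendsto_of_tendsto_of_tendsto_of_le_of_le' hlim hb ?_ (.of_forall hab)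
  filter_upwards [hlow, hb.eventually (lt_mem_nhds hL)] with i hi hbi
  exact div_le_of_le_mul₀ (by positivity) (ha i) hi

theorem sval_pow_root_jordanBlock_tendsto_general
    (lam : ℂ) (k : ℕ) :
    ∀ j : Fin k, Tendsto (fun n : ℕ => sval (jordanBlock lam k ^ n) j ^ ((n : ℝ)⁻¹))
      atTop (nhds ‖lam‖) := by
  intro j
  have hk : 0 < k := j.pos
  set J := jordanBlock lam k
  refine tendsto_of_pow_le_mul_pow hk (tendsto_frobenius_norm_pow_jordanBlock lam hk)
    (fun n => Real.rpow_nonneg (sval_nonneg _ j) _)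
    (fun n => Real.rpow_le_rpow (sval_nonneg _ j) (sval_le_frobenius_norm _ j) (by positivity)) ?_
  filter_upwards [eventually_ne_atTop 0] with n hn
  have hdet : ‖(J ^ n).det‖ = (‖lam‖ ^ k) ^ n := by
    rw [det_pow, det_jordanBlock, norm_pow, norm_pow]
  calc ‖lam‖ ^ k = ((‖lam‖ ^ k) ^ n) ^ (n : ℝ)⁻¹ :=
        (Real.pow_rpow_inv_natCast (by positivity) hn).symm
    _ ≤ (sval (J ^ n) j * ‖J ^ n‖ ^ (k - 1)) ^ (n : ℝ)⁻¹ :=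
        Real.rpow_le_rpow (by positivity) (hdet ▸ norm_det_le_sval_mul_frobenius_norm_pow _ j)
          (by positivity)
    _ = _ := by
        rw [Real.mul_rpow (sval_nonneg _ j) (by positivity), Real.rpow_pow_comm (norm_nonneg _)]

/-- For a `k × k` Jordan block with eigenvalue `lam`, every limiting
`n`-th root of the singular values of its `n`-th power equals `|lam|`:
`σ_j((J_λ)^n)^{1/n} → |λ|` for all `j`. -/
theorem sval_pow_root_jordanBlock_tendsto
    (lam : ℂ) (k : ℕ) (hk : 1 ≤ k) :
    ∀ j : Fin k, Tendsto (fun n : ℕ => sval (jordanBlock lam k ^ n) j ^ ((n : ℝ)⁻¹))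
      atTop (nhds ‖lam‖) :=
  sval_pow_root_jordanBlock_tendsto_general lam k
end
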